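/- arXiv:1701.05855 — 7 statements merged into one kernel-verified Lean document; each statement's English description precedes it below -/
import Mathlib

section
/- Let c > 0 be a constant and let G be a multi-hypergraph on vertex set V with m edges such that every vertex has degree less than cm. If A and B are disjoint subsets of V, each of which meets at least 2cm edges, then there is a partition of A ∪ B into three parts, each of which meets at least cm edges. -/
/-!
Write `t = c m` and `d` for `edgesMeeting G`. Choose `M ⊆ A` minimal with `d M ≥ t` and `v ∈ M`,
and cover `A` by the three pieces `{v}`, `M \ {v}`, `A \ M`. Since `d` is subadditive, every
vertex meets fewer than `t` edges and `d A ≥ 2 t`, removing any one piece from `A` leaves a set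
meeting at least `t` edges. Cover `B` in the same way. If the union of some piece of `A` with some
piece of `B` meets `t` edges, it is the third part of the partition, what remains of `A` and of `B`
being the other two. Otherwise count edges: one meeting exactly one of `A`, `B` meets at least three
of the nine unions, one meeting both meets at least five, so
`20 t ≤ 5 (d A + d B) ≤ 2 ∑ d (Aᵢ ∪ Bⱼ) < 18 t`.
-/

/-- The number of edges of the multi-hypergraph `G` (a multiset of finite edges,
counted with multiplicity) that meet the vertex set `A`. -/
def edgesMeeting {V : Type*} [DecidableEq V] (G : Multiset (Finset V)) (A : Finset V) : ℕ :=
  Multiset.card (G.filter fun e => (A ∩ e).Nonempty)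

open Finset

theorem five_mul_ite_exists_add_le (p q : Fin 3 → Prop) [DecidablePred p] [DecidablePred q] :
    5 * ((if ∃ i, p i then 1 else 0) + (if ∃ j, q j then 1 else 0)) ≤
      2 * ∑ i, ∑ j, if p i ∨ q j then 1 else 0 := by
  simp only [Fin.sum_univ_three, Fin.exists_fin_succ, Fin.exists_fin_zero]
  by_cases p 0 <;> by_cases p 1 <;> by_cases p 2 <;> by_cases q 0 <;> by_cases q 1 <;>
    by_cases q 2 <;> simp [*]

namespace edgesMeeting

variable {V : Type*} [DecidableEq V] (G : Multiset (Finset V))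

theorem eq_sum_map (A : Finset V) :
    edgesMeeting G A = (G.map fun e => if (A ∩ e).Nonempty then 1 else 0).sum := by
  induction G using Multiset.induction_on with
  | empty => simp [edgesMeeting]
  | cons e G ih =>
    rw [edgesMeeting, Multiset.filter_cons] at *
    split_ifs with h <;> simp [ih, add_comm, h]

@[simp]
theorem empty : edgesMeeting G ∅ = 0 := by
  simp [edgesMeeting]

theorem le_sdiff_add (A X : Finset V) :
    edgesMeeting G A ≤ edgesMeeting G (A \ X) + edgesMeeting G X := by
  simp only [eq_sum_map, ← Multiset.sum_map_add]
  refine Multiset.sum_map_le_sum_map _ _ fun e _ => ?_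
  have hcover : A ∩ e ⊆ (A \ X) ∩ e ∪ X ∩ e := by
    intro x
    simp only [mem_inter, mem_union, mem_sdiff]
    tauto
  have hsplit (hA : (A ∩ e).Nonempty) := union_nonempty.1 (hA.mono hcover)
  split_ifs <;> simp_all

theorem five_mul_add_le_sum_union (P Q : Fin 3 → Finset V) :
    5 * (edgesMeeting G (univ.biUnion P) + edgesMeeting G (univ.biUnion Q)) ≤
      2 * ∑ i, ∑ j, edgesMeeting G (P i ∪ Q j) := by
  simp only [eq_sum_map, ← Multiset.sum_map_add, ← Multiset.sum_map_mul_left,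
    ← Multiset.sum_map_sum]
  refine Multiset.sum_map_le_sum_map _ _ fun e _ => ?_
  simp only [biUnion_inter, biUnion_nonempty, mem_univ, true_and,
    union_inter_distrib_right, union_nonempty]
  exact five_mul_ite_exists_add_le _ _

variable {G} {t : ℝ}

theorem exists_subset_le_erase_lt (ht : 0 < t) {A : Finset V}
    (hA : t ≤ edgesMeeting G A) :
    ∃ M ⊆ A, ∃ v ∈ M, t ≤ edgesMeeting G M ∧ (edgesMeeting G (M.erase v) : ℝ) < t := by
  induction A using strongInduction with
  | H A ih =>
    by_cases h : ∃ v ∈ A, t ≤ edgesMeeting G (A.erase v)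
    · obtain ⟨v, hv, hle⟩ := h
      obtain ⟨M, hMA, rest⟩ := ih _ (erase_ssubset hv) hle
      exact ⟨M, hMA.trans (erase_subset v A), rest⟩
    · push Not at h
      obtain ⟨v, hv⟩ : A.Nonempty := by
        rw [nonempty_iff_ne_empty]
        rintro rfl
        simp only [empty, CharP.cast_eq_zero] at hA
        linarith
      exact ⟨A, subset_rfl, v, hv, hA, h v hv⟩

theorem le_sdiff_of_lt {A X : Finset V} (hA : 2 * t ≤ edgesMeeting G A)
    (hX : (edgesMeeting G X : ℝ) < t) : t ≤ edgesMeeting G (A \ X) := by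
  have : (edgesMeeting G A : ℝ) ≤ edgesMeeting G (A \ X) + edgesMeeting G X := by
    exact_mod_cast le_sdiff_add G A X
  linarith

theorem exists_cover_three (ht : 0 < t) {A : Finset V}
    (hdeg : ∀ v ∈ A, (edgesMeeting G {v} : ℝ) < t) (hA : 2 * t ≤ edgesMeeting G A) :
    ∃ P : Fin 3 → Finset V, univ.biUnion P = A ∧ ∀ i, t ≤ edgesMeeting G (A \ P i) := by
  obtain ⟨M, hMA, v, hvM, hM, hMv⟩ := exists_subset_le_erase_lt ht (by linarith : t ≤ _)
  refine ⟨![{v}, M.erase v, A \ M], ?_, ?_⟩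
  · ext x
    simp only [mem_biUnion, mem_univ, true_and, Fin.exists_fin_succ,
      Matrix.cons_val_zero, Matrix.cons_val_succ, Matrix.cons_val_fin_one, mem_singleton,
      mem_erase, mem_sdiff, exists_const]
    grind
  · intro i
    fin_cases i
    · exact le_sdiff_of_lt hA (hdeg v (hMA hvM))
    · exact le_sdiff_of_lt hA hMv
    · simpa [Finset.sdiff_sdiff_eq_self hMA] using hM

theorem exists_le_union {P Q : Fin 3 → Finset V}
    (hP : 2 * t ≤ edgesMeeting G (univ.biUnion P))
    (hQ : 2 * t ≤ edgesMeeting G (univ.biUnion Q)) :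
    ∃ i j, t ≤ edgesMeeting G (P i ∪ Q j) := by
  by_contra! h
  have hcount : 5 * ((edgesMeeting G (univ.biUnion P) : ℝ) + edgesMeeting G (univ.biUnion Q)) ≤
      2 * ∑ i, ∑ j, (edgesMeeting G (P i ∪ Q j) : ℝ) := by
    exact_mod_cast five_mul_add_le_sum_union G P Q
  have hsum : ∑ i, ∑ j, (edgesMeeting G (P i ∪ Q j) : ℝ) < ∑ i : Fin 3, ∑ j : Fin 3, t :=
    sum_lt_sum_of_nonempty univ_nonempty fun i _ =>
      sum_lt_sum_of_nonempty univ_nonempty fun j _ => h i j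
  simp only [sum_const, card_univ, Fintype.card_fin, nsmul_eq_mul, Nat.cast_ofNat] at hsum
  linarith

theorem exists_partition_three {A B : Finset V} (hdeg : ∀ v ∈ A ∪ B, (edgesMeeting G {v} : ℝ) < t)
    (hAB : Disjoint A B) (hA : 2 * t ≤ edgesMeeting G A) (hB : 2 * t ≤ edgesMeeting G B) :
    ∃ P₁ P₂ P₃ : Finset V,
      P₁ ∪ P₂ ∪ P₃ = A ∪ B ∧
      Disjoint P₁ P₂ ∧ Disjoint P₁ P₃ ∧ Disjoint P₂ P₃ ∧
      t ≤ (edgesMeeting G P₁ : ℝ) ∧ t ≤ (edgesMeeting G P₂ : ℝ) ∧ t ≤ (edgesMeeting G P₃ : ℝ) := by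
  rcases le_or_gt t 0 with ht | ht
  · have hnonneg (X : Finset V) : t ≤ edgesMeeting G X := ht.trans (Nat.cast_nonneg _)
    exact ⟨A, B, ∅, by simp, hAB, disjoint_empty_right _, disjoint_empty_right _,
      hnonneg _, hnonneg _, hnonneg _⟩
  obtain ⟨P, hPA, hP⟩ := exists_cover_three ht (fun v hv => hdeg v (mem_union_left _ hv)) hA
  obtain ⟨Q, hQB, hQ⟩ := exists_cover_three ht (fun v hv => hdeg v (mem_union_right _ hv)) hB
  obtain ⟨i, j, hij⟩ := exists_le_union (hPA ▸ hA) (hQB ▸ hB)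
  have hPi : P i ⊆ A := hPA ▸ subset_biUnion_of_mem P (mem_univ i)
  have hQj : Q j ⊆ B := hQB ▸ subset_biUnion_of_mem Q (mem_univ j)
  refine ⟨A \ P i, B \ Q j, P i ∪ Q j, ?_, hAB.mono sdiff_subset sdiff_subset,
    disjoint_union_right.2 ⟨sdiff_disjoint, hAB.mono sdiff_subset hQj⟩,
    disjoint_union_right.2 ⟨hAB.symm.mono sdiff_subset hPi, sdiff_disjoint⟩,
    hP i, hQ j, hij⟩
  ext x
  simp only [mem_union, mem_sdiff]
  grind

end edgesMeeting

theorem statement0_general {V : Type*} [DecidableEq V] (c : ℝ)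
    (G : Multiset (Finset V))
    (m : ℕ)
    (hdeg : ∀ v : V, (edgesMeeting G {v} : ℝ) < c * m)
    (A B : Finset V) (hAB : Disjoint A B)
    (hA : 2 * c * m ≤ (edgesMeeting G A : ℝ))
    (hB : 2 * c * m ≤ (edgesMeeting G B : ℝ)) :
    ∃ P₁ P₂ P₃ : Finset V,
      P₁ ∪ P₂ ∪ P₃ = A ∪ B ∧
      Disjoint P₁ P₂ ∧ Disjoint P₁ P₃ ∧ Disjoint P₂ P₃ ∧
      c * m ≤ (edgesMeeting G P₁ : ℝ) ∧
      c * m ≤ (edgesMeeting G P₂ : ℝ) ∧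
      c * m ≤ (edgesMeeting G P₃ : ℝ) := by
  rw [mul_assoc] at hA hB
  exact edgesMeeting.exists_partition_three (fun v _ => hdeg v) hAB hA hB

/-- If every vertex has degree less than `c * m` and `A`, `B` are disjoint sets each meeting
at least `2 * c * m` edges, then `A ∪ B` can be partitioned into three parts, each meeting
at least `c * m` edges. -/
theorem statement0 {V : Type*} [DecidableEq V] (c : ℝ) (hc : 0 < c)
    (G : Multiset (Finset V)) (hGne : ∀ e ∈ G, e.Nonempty)
    (m : ℕ) (hm : Multiset.card G = m)
    (hdeg : ∀ v : V, (edgesMeeting G {v} : ℝ) < c * m)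
    (A B : Finset V) (hAB : Disjoint A B)
    (hA : 2 * c * m ≤ (edgesMeeting G A : ℝ))
    (hB : 2 * c * m ≤ (edgesMeeting G B : ℝ)) :
    ∃ P₁ P₂ P₃ : Finset V,
      P₁ ∪ P₂ ∪ P₃ = A ∪ B ∧
      Disjoint P₁ P₂ ∧ Disjoint P₁ P₃ ∧ Disjoint P₂ P₃ ∧
      c * m ≤ (edgesMeeting G P₁ : ℝ) ∧
      c * m ≤ (edgesMeeting G P₂ : ℝ) ∧
      c * m ≤ (edgesMeeting G P₃ : ℝ) :=
  statement0_general c G m hdeg A B hAB hA hB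
end

section
/- Let c > 0 be a constant and let G be a multi-hypergraph on vertex set V with m edges such that every vertex has degree less than cm. If A and B are disjoint subsets of V, each of which meets at least 2cm edges, then there is a partition of A ∪ B into three parts such that two of the parts each meet at least cm edges and the third part meets at least (10/9)cm edges. -/
/-!
Edge counting `d` is a polymatroid rank function (normalized, monotone, submodular), and the
argument uses nothing else. Put `t = c m` and call `X ⊆ S` co-large in `S` if `d (S \ X) ≥ t`.
If `d S ≥ 2t` and every singleton has `d < t`, then `S` is the union of three co-large sets:
`{v}`, `U \ {v}` and `S \ U`, where `U ⊆ S` is minimal with `d U ≥ t` and `v ∈ U`.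
Let `A'` maximize `d` among the co-large subsets of `A`; covering `A` gives `s = d A' ≥ 2t/3`.
Covering `B` and applying submodularity to the marginal gain `d (A' ∪ ·) - d A'` gives a
co-large `B' ⊆ B` with `d (A' ∪ B') ≥ (d B + 2s)/3 ≥ 10t/9`. The parts are `A \ A'`, `B \ B'`
and `A' ∪ B'`.
-/

open Finset

structure IsPolymatroidRank {V : Type*} [DecidableEq V] (f : Finset V → ℝ) : Prop where
  map_empty : f ∅ = 0
  mono : Monotone f
  union_add_inter_le (P Q : Finset V) : f (P ∪ Q) + f (P ∩ Q) ≤ f P + f Q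

theorem Finset.exists_subset_forall_erase_lt {V β : Type*} [DecidableEq V] [LinearOrder β]
    {f : Finset V → β} {t : β} {S : Finset V} (hS : t ≤ f S) :
    ∃ U ⊆ S, t ≤ f U ∧ ∀ v ∈ U, f (U.erase v) < t := by
  obtain ⟨U, hUS, hU⟩ := exists_minimal_le_of_wellFoundedLT (fun U => t ≤ f U) S hS
  exact ⟨U, hUS, hU.prop, fun v hv => not_le.1 (hU.not_prop_of_lt (erase_ssubset hv))⟩

theorem Finset.sdiff_union_sdiff_union_union {V : Type*} [DecidableEq V] {A A' B B' : Finset V}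
    (hA' : A' ⊆ A) (hB' : B' ⊆ B) (hAB : Disjoint A B) :
    (A \ A') ∪ (B \ B') ∪ (A' ∪ B') = A ∪ B ∧ Disjoint (A \ A') (B \ B') ∧
      Disjoint (A \ A') (A' ∪ B') ∧ Disjoint (B \ B') (A' ∪ B') := by
  refine ⟨?_, ?_, ?_, ?_⟩ <;> grind [disjoint_left]

namespace IsPolymatroidRank

variable {V : Type*} [DecidableEq V] {f : Finset V → ℝ}

theorem nonneg (hf : IsPolymatroidRank f) (S : Finset V) : 0 ≤ f S :=
  hf.map_empty ▸ hf.mono (empty_subset S)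

theorem union_le_add (hf : IsPolymatroidRank f) (P Q : Finset V) : f (P ∪ Q) ≤ f P + f Q := by
  linarith [hf.union_add_inter_le P Q, hf.nonneg (P ∩ Q)]

theorem union_union_le_add (hf : IsPolymatroidRank f) (P Q R : Finset V) :
    f (P ∪ Q ∪ R) ≤ f P + f Q + f R := by
  linarith [hf.union_le_add (P ∪ Q) R, hf.union_le_add P Q]

theorem le_add_sdiff (hf : IsPolymatroidRank f) {X S : Finset V} (h : X ⊆ S) :
    f S ≤ f X + f (S \ X) := by
  simpa only [union_sdiff_of_subset h] using hf.union_le_add X (S \ X)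

theorem marginal (hf : IsPolymatroidRank f) (X : Finset V) :
    IsPolymatroidRank fun S => f (X ∪ S) - f X where
  map_empty := by simp
  mono P Q h := sub_le_sub_right (hf.mono (union_subset_union_right h)) _
  union_add_inter_le P Q := by
    have := hf.union_add_inter_le (X ∪ P) (X ∪ Q)
    rw [← union_union_distrib_left, ← union_inter_distrib_left] at this
    linarith

variable {t : ℝ}

theorem exists_cover_of_two_mul_le (hf : IsPolymatroidRank f) (ht : 0 < t)
    (hdeg : ∀ v, f {v} < t) {S : Finset V} (hS : 2 * t ≤ f S) :
    ∃ X₁ X₂ X₃, X₁ ∪ X₂ ∪ X₃ = S ∧ (X₁ ⊆ S ∧ t ≤ f (S \ X₁)) ∧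
      (X₂ ⊆ S ∧ t ≤ f (S \ X₂)) ∧ (X₃ ⊆ S ∧ t ≤ f (S \ X₃)) := by
  obtain ⟨U, hUS, hU, hUmin⟩ := exists_subset_forall_erase_lt (by linarith : t ≤ f S)
  obtain ⟨v, hv⟩ : U.Nonempty := nonempty_iff_ne_empty.2 fun h => by
    rw [h, hf.map_empty] at hU
    linarith
  have hvS : {v} ⊆ S := singleton_subset_iff.2 (hUS hv)
  have hUvS : U.erase v ⊆ S := (erase_subset v U).trans hUS
  refine ⟨{v}, U.erase v, S \ U, ?_, ⟨hvS, ?_⟩, ⟨hUvS, ?_⟩, ⟨sdiff_subset, ?_⟩⟩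
  · rw [← insert_eq, insert_erase hv, union_sdiff_of_subset hUS]
  · linarith [hf.le_add_sdiff hvS, hdeg v]
  · linarith [hf.le_add_sdiff hUvS, hUmin v hv]
  · rwa [Finset.sdiff_sdiff_eq_self hUS]

theorem exists_subset_marginal_ge (hf : IsPolymatroidRank f) (ht : 0 < t)
    (hdeg : ∀ v, f {v} < t) {B : Finset V} (hB : 2 * t ≤ f B) (X : Finset V) :
    ∃ B' ⊆ B, t ≤ f (B \ B') ∧ f B - f X ≤ 3 * (f (X ∪ B') - f X) := by
  obtain ⟨X₁, X₂, X₃, hcover, h₁, h₂, h₃⟩ := hf.exists_cover_of_two_mul_le ht hdeg hB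
  have hgain : f B - f X ≤ (f (X ∪ X₁) - f X) + (f (X ∪ X₂) - f X) + (f (X ∪ X₃) - f X) := by
    calc f B - f X ≤ f (X ∪ B) - f X := sub_le_sub_right (hf.mono subset_union_right) _
      _ ≤ _ := hcover ▸ (hf.marginal X).union_union_le_add X₁ X₂ X₃
  by_contra! h
  linarith [h X₁ h₁.1 h₁.2, h X₂ h₂.1 h₂.2, h X₃ h₃.1 h₃.2]

theorem exists_three_partition (hf : IsPolymatroidRank f) (hdeg : ∀ v, f {v} < t)
    {A B : Finset V} (hAB : Disjoint A B) (hA : 2 * t ≤ f A) (hB : 2 * t ≤ f B) :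
    ∃ P₁ P₂ P₃ : Finset V, P₁ ∪ P₂ ∪ P₃ = A ∪ B ∧
      Disjoint P₁ P₂ ∧ Disjoint P₁ P₃ ∧ Disjoint P₂ P₃ ∧
      t ≤ f P₁ ∧ t ≤ f P₂ ∧ 10 / 9 * t ≤ f P₃ := by
  rcases le_or_gt t 0 with ht | ht
  · refine ⟨A, B, ∅, by simp, hAB, disjoint_empty_right _, disjoint_empty_right _, ?_, ?_, ?_⟩
    · linarith [hf.nonneg A]
    · linarith [hf.nonneg B]
    · linarith [hf.map_empty]
  obtain ⟨A', hA', hA'max⟩ := exists_max_image (A.powerset.filter fun X => t ≤ f (A \ X)) f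
    ⟨∅, by simp only [mem_filter, empty_mem_powerset, sdiff_empty, true_and]; linarith⟩
  simp only [mem_filter, mem_powerset] at hA' hA'max
  have hs : 2 * t ≤ 3 * f A' := by
    obtain ⟨X₁, X₂, X₃, hcover, h₁, h₂, h₃⟩ := hf.exists_cover_of_two_mul_le ht hdeg hA
    linarith [hcover ▸ hf.union_union_le_add X₁ X₂ X₃, hA'max X₁ h₁, hA'max X₂ h₂, hA'max X₃ h₃]
  obtain ⟨B', hB'B, hB', hgain⟩ := hf.exists_subset_marginal_ge ht hdeg hB A'
  obtain ⟨hunion, h₁₂, h₁₃, h₂₃⟩ := sdiff_union_sdiff_union_union hA'.1 hB'B hAB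
  exact ⟨A \ A', B \ B', A' ∪ B', hunion, h₁₂, h₁₃, h₂₃, hA'.2, hB', by linarith⟩

end IsPolymatroidRank

section edgesMeeting

variable {V : Type*} [DecidableEq V] (G : Multiset (Finset V))

theorem edgesMeeting_mono : Monotone (edgesMeeting G) := fun _ _ h =>
  Multiset.card_le_card <| Multiset.monotone_filter_right G fun _ he =>
    he.mono (inter_subset_inter_right h)

theorem edgesMeeting_union_add_inter_le (P Q : Finset V) :
    edgesMeeting G (P ∪ Q) + edgesMeeting G (P ∩ Q) ≤ edgesMeeting G P + edgesMeeting G Q := by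
  have hunion : G.filter (fun e => ((P ∪ Q) ∩ e).Nonempty) =
      G.filter (fun e => (P ∩ e).Nonempty ∨ (Q ∩ e).Nonempty) :=
    Multiset.filter_congr fun e _ => by rw [union_inter_distrib_right, union_nonempty]
  have hinter : G.filter (fun e => (P ∩ Q ∩ e).Nonempty) ≤
      G.filter (fun e => (P ∩ e).Nonempty ∧ (Q ∩ e).Nonempty) :=
    Multiset.monotone_filter_right G fun _ ⟨x, hx⟩ =>
      ⟨⟨x, by simp_all⟩, ⟨x, by simp_all⟩⟩
  calc edgesMeeting G (P ∪ Q) + edgesMeeting G (P ∩ Q)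
      ≤ Multiset.card (G.filter fun e => (P ∩ e).Nonempty ∨ (Q ∩ e).Nonempty) +
          Multiset.card (G.filter fun e => (P ∩ e).Nonempty ∧ (Q ∩ e).Nonempty) := by
        rw [edgesMeeting, edgesMeeting, hunion]
        exact Nat.add_le_add_left (Multiset.card_le_card hinter) _
    _ = edgesMeeting G P + edgesMeeting G Q := by
        rw [edgesMeeting, edgesMeeting, ← Multiset.card_add, ← Multiset.card_add]
        exact congrArg _ (Multiset.filter_add_filter _ _ G).symm

theorem isPolymatroidRank_edgesMeeting : IsPolymatroidRank fun A => (edgesMeeting G A : ℝ) where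
  map_empty := by simp [edgesMeeting]
  mono _ _ h := Nat.mono_cast (edgesMeeting_mono G h)
  union_add_inter_le P Q := by exact_mod_cast edgesMeeting_union_add_inter_le G P Q

end edgesMeeting

theorem statement1_general {V : Type*} [DecidableEq V] (c : ℝ)
    (G : Multiset (Finset V))
    (m : ℕ)
    (hdeg : ∀ v : V, (edgesMeeting G {v} : ℝ) < c * m)
    (A B : Finset V) (hAB : Disjoint A B)
    (hA : 2 * c * m ≤ (edgesMeeting G A : ℝ))
    (hB : 2 * c * m ≤ (edgesMeeting G B : ℝ)) :
    ∃ P₁ P₂ P₃ : Finset V,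
      P₁ ∪ P₂ ∪ P₃ = A ∪ B ∧
      Disjoint P₁ P₂ ∧ Disjoint P₁ P₃ ∧ Disjoint P₂ P₃ ∧
      c * m ≤ (edgesMeeting G P₁ : ℝ) ∧
      c * m ≤ (edgesMeeting G P₂ : ℝ) ∧
      (10 / 9) * c * m ≤ (edgesMeeting G P₃ : ℝ) := by
  simp only [mul_assoc] at hA hB ⊢
  exact (isPolymatroidRank_edgesMeeting G).exists_three_partition hdeg hAB hA hB

/-- If every vertex has degree less than `c * m` and `A`, `B` are disjoint sets each meeting
at least `2 * c * m` edges, then `A ∪ B` can be partitioned into three parts, two of which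
meet at least `c * m` edges and the third at least `(10/9) * c * m` edges. -/
theorem statement1 {V : Type*} [DecidableEq V] (c : ℝ) (hc : 0 < c)
    (G : Multiset (Finset V)) (hGne : ∀ e ∈ G, e.Nonempty)
    (m : ℕ) (hm : Multiset.card G = m)
    (hdeg : ∀ v : V, (edgesMeeting G {v} : ℝ) < c * m)
    (A B : Finset V) (hAB : Disjoint A B)
    (hA : 2 * c * m ≤ (edgesMeeting G A : ℝ))
    (hB : 2 * c * m ≤ (edgesMeeting G B : ℝ)) :
    ∃ P₁ P₂ P₃ : Finset V,
      P₁ ∪ P₂ ∪ P₃ = A ∪ B ∧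
      Disjoint P₁ P₂ ∧ Disjoint P₁ P₃ ∧ Disjoint P₂ P₃ ∧
      c * m ≤ (edgesMeeting G P₁ : ℝ) ∧
      c * m ≤ (edgesMeeting G P₂ : ℝ) ∧
      (10 / 9) * c * m ≤ (edgesMeeting G P₃ : ℝ) :=
  statement1_general c G m hdeg A B hAB hA hB
end

section
/- Let c > 0 be a constant and let G be a multi-hypergraph with m edges on vertex set V such that every vertex of A has degree less than cm, and suppose every edge of G meets the set A ⊆ V in at most one vertex. If d(A) ≥ 2cm, then A may be partitioned into three parts A₁, A₂, A₃ such that the union of any two of the parts meets at least cm edges. -/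
/-!
Since every edge meets `A` at most once, `d` is additive on subsets of `A`: `d(X)` is the sum of
the degrees of the vertices of `X`. The problem becomes one about weights `w v < t` with total
`S ≥ 2t`. Take `B ⊆ A` of maximal size with `w(B) ≤ S - t` and a vertex `v ∉ B`; maximality gives
`w(B) + w(v) > S - t`. The parts `B`, `{v}`, `A \ (B ∪ {v})` work: the three pairwise unions weigh
`w(B) + w(v) > S - t`, `S - w(v) > S - t` and `S - w(B) ≥ t`, and `S - t ≥ t`.
-/

open Finset

section WeightedPartition

variable {ι : Type*} [DecidableEq ι]

theorem exists_subset_sum_le_lt_add {A : Finset ι} {w : ι → ℝ} {s : ℝ} (hs₀ : 0 ≤ s)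
    (hs : s < ∑ v ∈ A, w v) :
    ∃ B ⊆ A, ∃ v ∈ A, v ∉ B ∧ ∑ u ∈ B, w u ≤ s ∧ s < ∑ u ∈ B, w u + w v := by
  set F := A.powerset.filter fun B => ∑ u ∈ B, w u ≤ s
  have hF : F.Nonempty := ⟨∅, by simpa [F] using hs₀⟩
  obtain ⟨B, hBF, hBmax⟩ := F.exists_max_image card hF
  obtain ⟨hBA, hBs⟩ : B ⊆ A ∧ ∑ u ∈ B, w u ≤ s := by simpa [F] using hBF
  obtain ⟨v, hvA, hvB⟩ : ∃ v ∈ A, v ∉ B :=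
    exists_of_ssubset (hBA.ssubset_of_ne (by rintro rfl; linarith))
  refine ⟨B, hBA, v, hvA, hvB, hBs, ?_⟩
  by_contra! hle
  have hvBF : insert v B ∈ F := by
    simpa [F, sum_insert hvB, insert_subset_iff, hvA, hBA, add_comm] using hle
  have := hBmax _ hvBF
  rw [card_insert_of_notMem hvB] at this
  omega

theorem exists_partition_three_pairwise_sum_ge {A : Finset ι} {w : ι → ℝ} {t : ℝ} (ht : 0 < t)
    (hw : ∀ v ∈ A, w v < t) (hA : 2 * t ≤ ∑ v ∈ A, w v) :
    ∃ A₁ A₂ A₃ : Finset ι, A₁ ∪ A₂ ∪ A₃ = A ∧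
      Disjoint A₁ A₂ ∧ Disjoint A₁ A₃ ∧ Disjoint A₂ A₃ ∧
      t ≤ ∑ v ∈ A₁ ∪ A₂, w v ∧ t ≤ ∑ v ∈ A₁ ∪ A₃, w v ∧ t ≤ ∑ v ∈ A₂ ∪ A₃, w v := by
  set S := ∑ v ∈ A, w v
  obtain ⟨B, hBA, v, hvA, hvB, hBle, hBlt⟩ :=
    exists_subset_sum_le_lt_add (w := w) (s := S - t) (by linarith) (by linarith)
  refine ⟨B, {v}, A \ insert v B, ?_, disjoint_singleton_right.2 hvB, ?_, ?_, ?_, ?_, ?_⟩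
  · ext u
    simp only [mem_union, mem_singleton, mem_sdiff, mem_insert]
    grind
  · exact disjoint_sdiff.mono_left (subset_insert v B)
  · exact disjoint_singleton_left.2 (notMem_sdiff_of_mem_right (mem_insert_self v B))
  · rw [union_comm, ← insert_eq, sum_insert hvB]
    linarith
  · have hunion : B ∪ A \ insert v B = A.erase v := by
      ext u
      simp only [mem_union, mem_sdiff, mem_insert, mem_erase]
      grind
    rw [hunion]
    have := add_sum_erase A w hvA
    linarith [hw v hvA]
  · have hunion : {v} ∪ A \ insert v B = A \ B := by
      ext u
      simp only [mem_union, mem_singleton, mem_sdiff, mem_insert]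
      grind
    rw [hunion]
    have := sum_sdiff hBA (f := w)
    linarith

end WeightedPartition

section Hypergraph

variable {V : Type*} [DecidableEq V]

@[simp]
theorem edgesMeeting_empty (G : Multiset (Finset V)) : edgesMeeting G ∅ = 0 := by
  simp [edgesMeeting]

theorem edgesMeeting_union {G : Multiset (Finset V)} {B C : Finset V}
    (h : ∀ e ∈ G, ¬((B ∩ e).Nonempty ∧ (C ∩ e).Nonempty)) :
    edgesMeeting G (B ∪ C) = edgesMeeting G B + edgesMeeting G C := by
  unfold edgesMeeting
  rw [← Multiset.card_add, Multiset.filter_add_filter, Multiset.filter_eq_nil.2 h, add_zero]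
  congr 1
  refine Multiset.filter_congr fun e _ => ?_
  rw [union_inter_distrib_right, union_nonempty]

theorem edgesMeeting_eq_sum {G : Multiset (Finset V)} {A X : Finset V}
    (hone : ∀ e ∈ G, (A ∩ e).card ≤ 1) (hX : X ⊆ A) :
    edgesMeeting G X = ∑ v ∈ X, edgesMeeting G {v} := by
  induction X using Finset.induction_on with
  | empty => simp
  | insert a X haX ih =>
    rw [sum_insert haX, ← ih ((subset_insert a X).trans hX), insert_eq]
    refine edgesMeeting_union ?_
    rintro e he ⟨⟨a', ha'⟩, b, hb⟩
    simp only [mem_inter, mem_singleton] at ha' hb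
    obtain ⟨rfl, ha'e⟩ := ha'
    have hab : a' = b := card_le_one.1 (hone e he) a' (mem_inter.2 ⟨hX (mem_insert_self a' X), ha'e⟩)
      b (mem_inter.2 ⟨hX (mem_insert_of_mem hb.1), hb.2⟩)
    exact haX (hab ▸ hb.1)

end Hypergraph

theorem statement4_general {V : Type*} [DecidableEq V] (c : ℝ)
    (G : Multiset (Finset V))
    (m : ℕ)
    (A : Finset V)
    (hdeg : ∀ v ∈ A, (edgesMeeting G {v} : ℝ) < c * m)
    (hone : ∀ e ∈ G, (A ∩ e).card ≤ 1)
    (hA : 2 * c * m ≤ (edgesMeeting G A : ℝ)) :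
    ∃ A₁ A₂ A₃ : Finset V,
      A₁ ∪ A₂ ∪ A₃ = A ∧
      Disjoint A₁ A₂ ∧ Disjoint A₁ A₃ ∧ Disjoint A₂ A₃ ∧
      c * m ≤ (edgesMeeting G (A₁ ∪ A₂) : ℝ) ∧
      c * m ≤ (edgesMeeting G (A₁ ∪ A₃) : ℝ) ∧
      c * m ≤ (edgesMeeting G (A₂ ∪ A₃) : ℝ) := by
  rcases le_or_gt (c * m) 0 with hcm | hcm
  · have hnonneg (X : Finset V) : c * m ≤ (edgesMeeting G X : ℝ) := hcm.trans (Nat.cast_nonneg _)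
    exact ⟨A, ∅, ∅, by simp, by simp, by simp, by simp, hnonneg _, hnonneg _, hnonneg _⟩
  have hsum {X : Finset V} (hX : X ⊆ A) :
      (edgesMeeting G X : ℝ) = ∑ v ∈ X, (edgesMeeting G {v} : ℝ) := by
    rw [edgesMeeting_eq_sum hone hX, Nat.cast_sum]
  rw [hsum subset_rfl, mul_assoc] at hA
  obtain ⟨A₁, A₂, A₃, hU, h₁₂, h₁₃, h₂₃, hA₁₂, hA₁₃, hA₂₃⟩ :=
    exists_partition_three_pairwise_sum_ge hcm hdeg hA
  refine ⟨A₁, A₂, A₃, hU, h₁₂, h₁₃, h₂₃, ?_, ?_, ?_⟩ <;>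
    rw [hsum (hU ▸ by intro; simp only [mem_union]; tauto)] <;> assumption

/-- If every vertex of `A` has degree less than `c * m`, every edge meets `A` in at most one
vertex, and `d(A) ≥ 2cm`, then `A` can be partitioned into three parts such that the union of
any two of the parts meets at least `c * m` edges. -/
theorem statement4 {V : Type*} [DecidableEq V] (c : ℝ) (hc : 0 < c)
    (G : Multiset (Finset V)) (hGne : ∀ e ∈ G, e.Nonempty)
    (m : ℕ) (hm : Multiset.card G = m)
    (A : Finset V)
    (hdeg : ∀ v ∈ A, (edgesMeeting G {v} : ℝ) < c * m)
    (hone : ∀ e ∈ G, (A ∩ e).card ≤ 1)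
    (hA : 2 * c * m ≤ (edgesMeeting G A : ℝ)) :
    ∃ A₁ A₂ A₃ : Finset V,
      A₁ ∪ A₂ ∪ A₃ = A ∧
      Disjoint A₁ A₂ ∧ Disjoint A₁ A₃ ∧ Disjoint A₂ A₃ ∧
      c * m ≤ (edgesMeeting G (A₁ ∪ A₂) : ℝ) ∧
      c * m ≤ (edgesMeeting G (A₁ ∪ A₃) : ℝ) ∧
      c * m ≤ (edgesMeeting G (A₂ ∪ A₃) : ℝ) :=
  statement4_general c G m A hdeg hone hA
end

section
/- Let G be an r-uniform multi-hypergraph on vertex set V with m edges, and let V₁, V₂, …, V_r be a partition of V into r parts such that the quantity Σᵢ d(Vᵢ) cannot be increased by moving any single vertex from its part into V_r. Then Σ_{i=1}^{r} d(Vᵢ) ≥ (r+1)m − r·d(V_r). -/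
open Finset

namespace Multiset

variable {α : Type*} (s : Multiset α)

lemma countP_eq_sum_map_ite (p : α → Prop) [DecidablePred p] :
    s.countP p = (s.map fun a => if p a then 1 else 0).sum := by
  induction s using Multiset.induction with
  | empty => simp
  | cons a s ih => by_cases h : p a <;> simp [h, ih, add_comm]

lemma countP_eq_countP_add_countP_of_iff {p q r : α → Prop} [DecidablePred p] [DecidablePred q]
    [DecidablePred r] (hpqr : ∀ a, p a ↔ q a ∨ r a) (hqr : ∀ a, q a → ¬r a) :
    s.countP p = s.countP q + s.countP r := by
  simp only [countP_eq_sum_map_ite, ← sum_map_add]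
  refine congrArg _ (map_congr rfl fun a _ => ?_)
  by_cases hq : q a <;> by_cases hr : r a <;> simp_all

end Multiset

lemma Finset.card_filter_erase_eq_one_add_one_le {ι : Type*} [Fintype ι] [DecidableEq ι]
    (c : ι → ℕ) (hc : ∑ i, c i = Fintype.card ι) (j : ι) :
    #{i ∈ univ.erase j | c i = 1} + 1 ≤ #{i | c i ≠ 0} := by
  have hsub : {i ∈ univ.erase j | c i = 1} ⊆ ({i | c i ≠ 0} : Finset ι) := by
    intro i
    simp +contextual
  by_cases hj : c j = 0
  · refine (card_le_card hsub).lt_of_ne fun heq => ?_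
    have hs : {i ∈ univ.erase j | c i = 1} = ({i | c i ≠ 0} : Finset ι) :=
      eq_of_subset_of_card_le hsub heq.ge
    have hsum : ∑ i, c i ≤ #(univ.erase j) := calc
      ∑ i, c i = ∑ i ∈ {i ∈ univ.erase j | c i = 1}, c i := by rw [hs, sum_filter_ne_zero]
      _ = #{i ∈ univ.erase j | c i = 1} := by
        rw [card_eq_sum_ones]
        exact sum_congr rfl (by simp +contextual)
      _ ≤ #(univ.erase j) := card_filter_le _ _
    rw [card_erase_of_mem (mem_univ j), card_univ] at hsum
    have := Fintype.card_pos_iff.2 ⟨j⟩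
    omega
  · have hsub' : {i ∈ univ.erase j | c i = 1} ⊆ ({i | c i ≠ 0} : Finset ι).erase j := by
      intro i
      simp +contextual
    have hj' : j ∈ ({i | c i ≠ 0} : Finset ι) := by simpa using hj
    have := card_le_card hsub'
    rw [card_erase_of_mem hj'] at this
    have := card_pos.2 ⟨j, hj'⟩
    omega

section Hypergraph

variable {V : Type*} [DecidableEq V] (G : Multiset (Finset V))

lemma inter_nonempty_iff_sdiff_singleton_inter_nonempty_or_eq (A e : Finset V) (v : V) :
    (A ∩ e).Nonempty ↔ ((A \ {v}) ∩ e).Nonempty ∨ A ∩ e = {v} := by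
  rw [sdiff_singleton_eq_erase, erase_inter, ← not_iff_not]
  by_cases h : A ∩ e = {v} <;> simp [not_nonempty_iff_eq_empty, erase_eq_empty_iff, h]

lemma union_singleton_inter_nonempty_iff (A e : Finset V) (v : V) :
    ((A ∪ {v}) ∩ e).Nonempty ↔ (A ∩ e).Nonempty ∨ (v ∈ e ∧ Disjoint A e) := by
  rw [union_inter_distrib_right, union_nonempty, ← not_disjoint_iff_nonempty_inter,
    ← not_disjoint_iff_nonempty_inter, disjoint_singleton_left]
  tauto

lemma sum_ite_inter_eq_singleton (A e : Finset V) :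
    ∑ v ∈ A, (if A ∩ e = {v} then 1 else 0) = if #(A ∩ e) = 1 then 1 else 0 := by
  split_ifs with h
  · obtain ⟨a, ha⟩ := card_eq_one.1 h
    have haA : a ∈ A := (mem_inter.1 (ha ▸ mem_singleton_self a)).1
    simp [ha, haA]
  · exact sum_eq_zero fun v _ => if_neg fun hv => h (by simp [hv])

lemma edgesMeeting_eq_countP (A : Finset V) :
    edgesMeeting G A = G.countP fun e => (A ∩ e).Nonempty :=
  (Multiset.countP_eq_card_filter ..).symm

lemma edgesMeeting_add_countP_disjoint (A : Finset V) :
    edgesMeeting G A + G.countP (Disjoint A) = Multiset.card G := by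
  simp only [edgesMeeting_eq_countP, ← not_disjoint_iff_nonempty_inter]
  rw [add_comm, ← Multiset.card_eq_countP_add_countP]

lemma edgesMeeting_union_singleton (A : Finset V) (v : V) :
    edgesMeeting G (A ∪ {v}) = edgesMeeting G A + G.countP fun e => v ∈ e ∧ Disjoint A e := by
  simp only [edgesMeeting_eq_countP]
  refine G.countP_eq_countP_add_countP_of_iff (union_singleton_inter_nonempty_iff A · v) ?_
  exact fun e h h' => not_disjoint_iff_nonempty_inter.2 h h'.2

lemma edgesMeeting_eq_sdiff_singleton_add (A : Finset V) (v : V) :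
    edgesMeeting G A = edgesMeeting G (A \ {v}) + G.countP fun e => A ∩ e = {v} := by
  simp only [edgesMeeting_eq_countP]
  refine G.countP_eq_countP_add_countP_of_iff
    (inter_nonempty_iff_sdiff_singleton_inter_nonempty_or_eq A · v) fun e h h' => ?_
  rw [sdiff_singleton_eq_erase, erase_inter, h'] at h
  simp at h

lemma countP_mem_disjoint_le_of_exchange {A B : Finset V} {v : V}
    (h : edgesMeeting G (A \ {v}) + edgesMeeting G (B ∪ {v}) ≤
      edgesMeeting G A + edgesMeeting G B) :
    G.countP (fun e => v ∈ e ∧ Disjoint B e) ≤ G.countP fun e => A ∩ e = {v} := by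
  rw [edgesMeeting_union_singleton, edgesMeeting_eq_sdiff_singleton_add G A v] at h
  omega

section Partition

variable {ι : Type*} [Fintype ι] {P : ι → Finset V}

lemma sum_card_inter_eq_card (hP : ∀ v, ∃! i, v ∈ P i) (e : Finset V) :
    ∑ i, #(P i ∩ e) = #e := calc
  ∑ i, #(P i ∩ e) = ∑ v ∈ e, #{i | v ∈ P i} := by
    simp only [inter_comm _ e, ← filter_mem_eq_inter, card_filter]
    exact sum_comm
  _ = #e := by
    rw [card_eq_sum_ones]
    refine sum_congr rfl fun v _ => card_eq_one.2 ?_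
    obtain ⟨i, hi, huniq⟩ := hP v
    exact ⟨i, by ext k; simpa using ⟨huniq k, fun h => h ▸ hi⟩⟩

variable [DecidableEq ι]

lemma sum_sum_ite_mem_and_disjoint (hP : ∀ v, ∃! i, v ∈ P i) (j : ι) (e : Finset V) :
    ∑ i ∈ univ.erase j, ∑ v ∈ P i, (if v ∈ e ∧ Disjoint (P j) e then 1 else 0) =
      if Disjoint (P j) e then #e else 0 := by
  split_ifs with h
  · have hj : #(P j ∩ e) = 0 := by simpa [← disjoint_iff_inter_eq_empty]
    simp only [h, and_true, sum_boole, Nat.cast_id, filter_mem_eq_inter]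
    rw [← sum_card_inter_eq_card hP e, ← sum_erase_add _ _ (mem_univ j), hj, add_zero]
  · simp [h]

/-- Moving `v` from `P i` into `P j` changes `∑ k, edgesMeeting G (P k)` only in the terms
`i` and `j`. -/
def NoImprovingMoveInto (P : ι → Finset V) (j : ι) : Prop :=
  ∀ i ≠ j, ∀ v ∈ P i, edgesMeeting G (P i \ {v}) + edgesMeeting G (P j ∪ {v}) ≤
    edgesMeeting G (P i) + edgesMeeting G (P j)

lemma card_mul_countP_disjoint_le (hunif : ∀ e ∈ G, #e = Fintype.card ι)
    (hP : ∀ v, ∃! i, v ∈ P i) {j : ι} (hopt : NoImprovingMoveInto G P j) :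
    Fintype.card ι * G.countP (Disjoint (P j)) ≤
      (G.map fun e => #{i ∈ univ.erase j | #(P i ∩ e) = 1}).sum := calc
  Fintype.card ι * G.countP (Disjoint (P j))
      = ∑ i ∈ univ.erase j, ∑ v ∈ P i, G.countP fun e => v ∈ e ∧ Disjoint (P j) e := by
    simp only [Multiset.countP_eq_sum_map_ite, ← Multiset.sum_map_mul_left,
      ← Multiset.sum_map_sum]
    refine congrArg _ (Multiset.map_congr rfl fun e he => ?_)
    rw [sum_sum_ite_mem_and_disjoint hP, hunif e he, mul_ite, mul_one, mul_zero]
  _ ≤ ∑ i ∈ univ.erase j, ∑ v ∈ P i, G.countP fun e => P i ∩ e = {v} :=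
    sum_le_sum fun i hi => sum_le_sum fun v hv =>
      countP_mem_disjoint_le_of_exchange G (hopt i (ne_of_mem_erase hi) v hv)
  _ = (G.map fun e => #{i ∈ univ.erase j | #(P i ∩ e) = 1}).sum := by
    simp only [Multiset.countP_eq_sum_map_ite, ← Multiset.sum_map_sum, sum_ite_inter_eq_singleton,
      card_filter]

lemma sum_map_card_filter_erase_add_card_le (hunif : ∀ e ∈ G, #e = Fintype.card ι)
    (hP : ∀ v, ∃! i, v ∈ P i) (j : ι) :
    (G.map fun e => #{i ∈ univ.erase j | #(P i ∩ e) = 1}).sum + Multiset.card G ≤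
      ∑ i, edgesMeeting G (P i) := calc
  _ = (G.map fun e => #{i ∈ univ.erase j | #(P i ∩ e) = 1} + 1).sum := by
    simp [Multiset.sum_map_add]
  _ ≤ (G.map fun e => #{i | #(P i ∩ e) ≠ 0}).sum :=
    Multiset.sum_map_le_sum_map _ _ fun e he => card_filter_erase_eq_one_add_one_le _
      (by rw [sum_card_inter_eq_card hP, hunif e he]) j
  _ = ∑ i, edgesMeeting G (P i) := by
    simp only [edgesMeeting_eq_countP, Multiset.countP_eq_sum_map_ite, ← Multiset.sum_map_sum,
      card_ne_zero, card_filter]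

theorem card_add_card_mul_countP_disjoint_le (hunif : ∀ e ∈ G, #e = Fintype.card ι)
    (hP : ∀ v, ∃! i, v ∈ P i) {j : ι} (hopt : NoImprovingMoveInto G P j) :
    Multiset.card G + Fintype.card ι * G.countP (Disjoint (P j)) ≤
      ∑ i, edgesMeeting G (P i) := by
  have := card_mul_countP_disjoint_le G hunif hP hopt
  have := sum_map_card_filter_erase_add_card_le G hunif hP j
  omega

end Partition

end Hypergraph

/-- If `V₁, …, V_r` is a partition of the vertex set of an `r`-uniform multi-hypergraph
such that `∑ i, d(Vᵢ)` cannot be increased by moving a single vertex into the last part,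
then `∑ i, d(Vᵢ) ≥ (r+1)m - r·d(V_r)`. -/
theorem statement5 {V : Type*} [DecidableEq V] (r : ℕ) (hr : 0 < r)
    (G : Multiset (Finset V)) (hunif : ∀ e ∈ G, e.card = r)
    (m : ℕ) (hm : Multiset.card G = m)
    (P : Fin r → Finset V) (hpart : ∀ v : V, ∃! i, v ∈ P i)
    (hlocal : ∀ i : Fin r, i ≠ ⟨r - 1, by omega⟩ → ∀ v ∈ P i,
      edgesMeeting G (P i \ {v}) + edgesMeeting G (P ⟨r - 1, by omega⟩ ∪ {v}) ≤
        edgesMeeting G (P i) + edgesMeeting G (P ⟨r - 1, by omega⟩)) :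
    ((r : ℝ) + 1) * m - r * edgesMeeting G (P ⟨r - 1, by omega⟩) ≤
      ∑ i : Fin r, (edgesMeeting G (P i) : ℝ) := by
  subst hm
  set last : Fin r := ⟨r - 1, by omega⟩
  set missing := G.countP (Disjoint (P last))
  have key : Multiset.card G + r * missing ≤ ∑ i, edgesMeeting G (P i) := by
    simpa using
      card_add_card_mul_countP_disjoint_le G (by simpa using hunif) hpart (j := last) hlocal
  have hsplit : edgesMeeting G (P last) + missing = Multiset.card G :=
    edgesMeeting_add_countP_disjoint G (P last)
  have key' : (Multiset.card G + r * missing : ℝ) ≤ ∑ i, (edgesMeeting G (P i) : ℝ) := by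
    exact_mod_cast key
  have hsplit' : (edgesMeeting G (P last) + missing : ℝ) = Multiset.card G := by
    exact_mod_cast hsplit
  linear_combination key' - r * hsplit'
end

section
/- Let 1/3 ≤ c ≤ 1/2. Suppose we have a finite, non-empty collection of real numbers in [0,1] whose arithmetic mean a satisfies a ≥ max(2c, 2/3 + c/6). If j of the numbers are at least 2c, k of them are at least c/2 but less than c, l of them are less than c/2, and the rest are at least c but less than 2c, then j ≥ k + 2l. -/
open scoped Classical

/-! Weigh each number `x` by `w(x) = 1` if `x ≥ 2c`, `-1` if `c/2 ≤ x < c`, `-2` if `x < c/2` and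
`0` otherwise, so that `∑ w = j - k - 2l`. For `A = max (2c) (2/3 + c/6)` the two lower bounds on
`A` give `x - A ≤ (1 - A) w(x)` for `x ≤ 1`, strictly when `w(x) < 0`. Hence if `j < k + 2l`, then
`0 ≤ ∑ (x - A) < (1 - A)(j - k - 2l) ≤ 0`. -/

theorem Multiset.sum_map_boole {α R : Type*} [AddCommMonoidWithOne R] (s : Multiset α)
    (p : α → Prop) [DecidablePred p] :
    (s.map fun x => if p x then (1 : R) else 0).sum = Multiset.card (s.filter p) := by
  induction s using Multiset.induction_on with
  | empty => simp
  | cons a s ih => by_cases ha : p a <;> simp [ha, ih, add_comm]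

theorem Multiset.card_mul_le_sum_of_le_div {A : ℝ} {s : Multiset ℝ}
    (h : A ≤ s.sum / Multiset.card s) : Multiset.card s * A ≤ s.sum := by
  rcases (Multiset.card s).eq_zero_or_pos with hs | hs
  · simp [Multiset.card_eq_zero.mp hs]
  · rwa [mul_comm, ← le_div_iff₀ (by exact_mod_cast hs)]

noncomputable def bandWeight (c x : ℝ) : ℝ :=
  (if 2 * c ≤ x then 1 else 0) - (if c / 2 ≤ x ∧ x < c then 1 else 0) -
    2 * (if x < c / 2 then 1 else 0)

theorem sum_map_bandWeight (c : ℝ) (s : Multiset ℝ) :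
    (s.map (bandWeight c)).sum =
      Multiset.card (s.filter fun x => 2 * c ≤ x) -
        Multiset.card (s.filter fun x => c / 2 ≤ x ∧ x < c) -
        2 * Multiset.card (s.filter fun x => x < c / 2) := by
  unfold bandWeight
  simp only [Multiset.sum_map_sub, Multiset.sum_map_mul_left, Multiset.sum_map_boole]

theorem sub_le_bandWeight {c A x : ℝ} (hA : max (2 * c) (2 / 3 + c / 6) ≤ A) (hx : x ≤ 1) :
    x - A ≤ (1 - A) * bandWeight c x := by
  rw [max_le_iff] at hA
  unfold bandWeight
  split_ifs <;> linarith

theorem sub_lt_bandWeight {c A x : ℝ} (hA : max (2 * c) (2 / 3 + c / 6) ≤ A)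
    (hw : bandWeight c x < 0) : x - A < (1 - A) * bandWeight c x := by
  rw [max_le_iff] at hA
  unfold bandWeight at *
  split_ifs at * <;> linarith

theorem sum_sub_card_mul_lt_bandWeight {c A : ℝ} {s : Multiset ℝ}
    (hA : max (2 * c) (2 / 3 + c / 6) ≤ A) (hs : ∀ x ∈ s, x ≤ 1)
    (hw : ∃ x ∈ s, bandWeight c x < 0) :
    s.sum - Multiset.card s * A < (1 - A) * (s.map (bandWeight c)).sum := by
  have key := Multiset.sum_lt_sum (fun x hx => sub_le_bandWeight hA (hs x hx))
    (hw.imp fun x ⟨hx, hwx⟩ => ⟨hx, sub_lt_bandWeight hA hwx⟩)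
  simpa [Multiset.sum_map_sub, Multiset.sum_map_mul_left] using key

theorem statement12_general (c : ℝ) (hc₂ : c ≤ 1 / 2)
    (s : Multiset ℝ) (hmem : ∀ x ∈ s, 0 ≤ x ∧ x ≤ 1)
    (hmean : max (2 * c) (2 / 3 + c / 6) ≤ s.sum / (Multiset.card s : ℝ)) :
    Multiset.card (s.filter fun x => c / 2 ≤ x ∧ x < c) +
      2 * Multiset.card (s.filter fun x => x < c / 2) ≤
    Multiset.card (s.filter fun x => 2 * c ≤ x) := by
  have hA : max (2 * c) (2 / 3 + c / 6) ≤ 1 := max_le (by linarith) (by linarith)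
  by_contra! hlt
  have hsum : (s.map (bandWeight c)).sum < 0 := by
    rw [sum_map_bandWeight, sub_sub, sub_neg]
    exact_mod_cast hlt
  have hneg : ∃ x ∈ s, bandWeight c x < 0 := by
    by_contra! hnonneg
    exact hsum.not_ge (Multiset.sum_nonneg fun w hw => by
      obtain ⟨x, hx, rfl⟩ := Multiset.mem_map.mp hw
      exact hnonneg x hx)
  have hgap := sum_sub_card_mul_lt_bandWeight le_rfl (fun x hx => (hmem x hx).2) hneg
  have hprod := mul_nonpos_of_nonneg_of_nonpos (sub_nonneg.mpr hA) hsum.le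
  linarith [Multiset.card_mul_le_sum_of_le_div hmean]

/-- Let `1/3 ≤ c ≤ 1/2` and let `s` be a finite non-empty multiset of numbers in `[0,1]` whose
arithmetic mean is at least `max (2c) (2/3 + c/6)`.  If `j` of the numbers are at least `2c`,
`k` are in `[c/2, c)` and `l` are below `c/2`, then `j ≥ k + 2l`. -/
theorem statement12 (c : ℝ) (hc₁ : 1 / 3 ≤ c) (hc₂ : c ≤ 1 / 2)
    (s : Multiset ℝ) (hs : s ≠ 0) (hmem : ∀ x ∈ s, 0 ≤ x ∧ x ≤ 1)
    (hmean : max (2 * c) (2 / 3 + c / 6) ≤ s.sum / (Multiset.card s : ℝ)) :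
    Multiset.card (s.filter fun x => c / 2 ≤ x ∧ x < c) +
      2 * Multiset.card (s.filter fun x => x < c / 2) ≤
    Multiset.card (s.filter fun x => 2 * c ≤ x) :=
  statement12_general c hc₂ s hmem hmean
end

section
/- Let r ≥ 3, let c, c′ > 0 be constants with c′ ≥ c, and let G be an r-uniform multi-hypergraph with m edges containing a vertex v of degree at least cm. Suppose that every (r−1)-uniform multi-hypergraph with m edges admits a partition of its vertex set into r−1 parts each meeting at least c′·m edges. Then G admits a partition of its vertex set into r parts each meeting at least cm edges. -/
section

variable {V : Type*} [DecidableEq V]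

theorem Finset.exists_subset_erase_card_eq_pred (s : Finset V) (v : V) :
    ∃ t ⊆ s.erase v, t.card = s.card - 1 :=
  Finset.exists_subset_card_eq Finset.pred_card_le_card_erase

theorem edgesMeeting_map_le (G : Multiset (Finset V)) (f : Finset V → Finset V)
    (A B : Finset V) (h : ∀ e, (A ∩ f e).Nonempty → (B ∩ e).Nonempty) :
    edgesMeeting (G.map f) A ≤ edgesMeeting G B := by
  unfold edgesMeeting
  rw [Multiset.filter_map, Multiset.card_map]
  exact Multiset.card_le_card (Multiset.monotone_filter_right G h)

theorem edgesMeeting_map_le_erase (G : Multiset (Finset V)) {f : Finset V → Finset V} {v : V}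
    (hf : ∀ e, f e ⊆ e.erase v) (A : Finset V) :
    edgesMeeting (G.map f) A ≤ edgesMeeting G (A.erase v) :=
  edgesMeeting_map_le G f A _ fun e ⟨w, hw⟩ =>
    have hwA := Finset.mem_inter.mp hw
    have hwe := Finset.mem_erase.mp (hf e hwA.2)
    ⟨w, Finset.mem_inter.mpr ⟨Finset.mem_erase.mpr ⟨hwe.1, hwA.1⟩, hwe.2⟩⟩

theorem existsUnique_mem_snoc_erase {n : ℕ} {Q : Fin n → Finset V}
    (hQ : ∀ w, ∃! i, w ∈ Q i) (v w : V) :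
    ∃! i, w ∈ Fin.snoc (α := fun _ => Finset V) (fun i => (Q i).erase v) {v} i := by
  by_cases hwv : w = v
  · subst hwv
    refine ⟨Fin.last n, by simp, fun i hi => ?_⟩
    induction i using Fin.lastCases with
    | last => rfl
    | cast j => simp at hi
  · obtain ⟨i, hi, hi_unique⟩ := hQ w
    refine ⟨i.castSucc, by simpa [hwv] using hi, fun j hj => ?_⟩
    induction j using Fin.lastCases with
    | last => exact absurd (by simpa using hj) hwv
    | cast j => simpa using congrArg Fin.castSucc (hi_unique j (Finset.mem_of_mem_erase (by simpa using hj)))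

end

theorem statement16_general (r : ℕ) (hr : 3 ≤ r) (c c' : ℝ)
    (hcc' : c ≤ c') {V : Type*} [DecidableEq V]
    (G : Multiset (Finset V)) (hunif : ∀ e ∈ G, e.card = r)
    (m : ℕ) (hm : Multiset.card G = m)
    (v : V) (hv : c * m ≤ (edgesMeeting G {v} : ℝ))
    (hind : ∀ H : Multiset (Finset V), (∀ e ∈ H, e.card = r - 1) →
      Multiset.card H = m →
      ∃ Q : Fin (r - 1) → Finset V, (∀ w : V, ∃! i, w ∈ Q i) ∧
        ∀ i : Fin (r - 1), c' * m ≤ (edgesMeeting H (Q i) : ℝ)) :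
    ∃ P : Fin r → Finset V, (∀ w : V, ∃! i, w ∈ P i) ∧
      ∀ i : Fin r, c * m ≤ (edgesMeeting G (P i) : ℝ) := by
  obtain ⟨n, rfl⟩ : ∃ n, r = n + 1 := ⟨r - 1, by omega⟩
  rw [Nat.add_sub_cancel] at hind
  choose f hf_sub hf_card using fun e => Finset.exists_subset_erase_card_eq_pred e v
  obtain ⟨Q, hQ_part, hQ_large⟩ := hind (G.map f)
    (by simp only [Multiset.mem_map]; rintro _ ⟨e, he, rfl⟩; simp [hf_card, hunif e he])
    (by rw [Multiset.card_map, hm])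
  refine ⟨Fin.snoc (α := fun _ => Finset V) (fun i => (Q i).erase v) {v},
    existsUnique_mem_snoc_erase hQ_part v, fun i => ?_⟩
  induction i using Fin.lastCases with
  | last => simpa using hv
  | cast i =>
    calc c * m ≤ c' * m := by gcongr
      _ ≤ edgesMeeting (G.map f) (Q i) := hQ_large i
      _ ≤ edgesMeeting G ((Q i).erase v) := mod_cast edgesMeeting_map_le_erase G hf_sub (Q i)
      _ = _ := by simp

/-- Induction step: let `r ≥ 3`, `c' ≥ c > 0`, and let `G` be an `r`-uniform
multi-hypergraph with `m` edges having a vertex `v` of degree at least `c m`.  If every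
`(r-1)`-uniform multi-hypergraph (on the same vertex set) with `m` edges admits a partition
into `r-1` parts each meeting at least `c' m` edges, then `G` admits a partition of its
vertex set into `r` parts each meeting at least `c m` edges. -/
theorem statement16 (r : ℕ) (hr : 3 ≤ r) (c c' : ℝ) (hc : 0 < c) (hc' : 0 < c')
    (hcc' : c ≤ c') {V : Type*} [Fintype V] [DecidableEq V]
    (G : Multiset (Finset V)) (hunif : ∀ e ∈ G, e.card = r)
    (m : ℕ) (hm : Multiset.card G = m)
    (v : V) (hv : c * m ≤ (edgesMeeting G {v} : ℝ))
    (hind : ∀ H : Multiset (Finset V), (∀ e ∈ H, e.card = r - 1) →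
      Multiset.card H = m →
      ∃ Q : Fin (r - 1) → Finset V, (∀ w : V, ∃! i, w ∈ Q i) ∧
        ∀ i : Fin (r - 1), c' * m ≤ (edgesMeeting H (Q i) : ℝ)) :
    ∃ P : Fin r → Finset V, (∀ w : V, ∃! i, w ∈ P i) ∧
      ∀ i : Fin r, c * m ≤ (edgesMeeting G (P i) : ℝ) :=
  statement16_general r hr c c' hcc' G hunif m hm v hv hind
end

section
/- Let G be an r-uniform multi-hypergraph with m edges, r ≥ 4, and let c = r/(3r−4). If V₁, …, V_r is a partition of the vertex set for which Σᵢ d(Vᵢ) is as large as possible, ordered so that d(V₁) ≥ ⋯ ≥ d(V_r), and if d(V_r) < c·m/2, then (1/r)·Σ_{i=1}^{r} d(Vᵢ)/m > (r+1)/r − c/2 ≥ max(2c, 2/3 + c/6). -/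
open Finset Function

theorem Multiset.sum_countP_eq_sum_map_card_filter {α ι : Type*} [Fintype ι] (s : Multiset α)
    (p : ι → α → Prop) [∀ i, DecidablePred (p i)] [∀ a, DecidablePred (p · a)] :
    ∑ i, s.countP (p i) = (s.map fun a => #{i | p i a}).sum := by
  induction s using Multiset.induction with
  | empty => simp
  | cons a s ih =>
    simp only [Multiset.countP_cons, sum_add_distrib, ih, Multiset.map_cons, Multiset.sum_cons,
      card_filter, add_comm]

theorem Multiset.sum_map_ite_eq_mul_countP {α : Type*} (s : Multiset α) (p : α → Prop)
    [DecidablePred p] (k : ℕ) :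
    (s.map fun a => if p a then k else 0).sum = k * s.countP p := by
  induction s using Multiset.induction with
  | empty => simp
  | cons a s ih =>
    simp only [Multiset.countP_cons, Multiset.map_cons, Multiset.sum_cons, ih]
    split_ifs <;> ring

theorem lt_mean_of_add_one_mul_le {r m S d c : ℝ} (hr : 0 < r) (hm : 0 < m)
    (hS : (r + 1) * m ≤ S + r * d) (hd : d < c * m / 2) :
    (r + 1) / r - c / 2 < 1 / r * (S / m) := by
  have hexpand : ((r + 1) / r - c / 2) * (r * m) = (r + 1) * m - r * (c * m / 2) := by
    field_simp
  rw [show 1 / r * (S / m) = S / (r * m) by ring, lt_div_iff₀ (by positivity), hexpand]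
  nlinarith

theorem max_le_add_one_div_sub_half (r : ℝ) (hr : 4 ≤ r) :
    max (2 * (r / (3 * r - 4))) (2 / 3 + r / (3 * r - 4) / 6)
      ≤ (r + 1) / r - r / (3 * r - 4) / 2 := by
  have h3 : 0 < 3 * r - 4 := by linarith
  have hr0 : 0 < r := by linarith
  refine max_le ?_ ?_
  · rw [div_div, div_sub_div _ _ hr0.ne' (by positivity), le_div_iff₀ (by positivity),
      mul_div_assoc', div_mul_eq_mul_div, div_le_iff₀ h3]
    nlinarith
  · rw [div_div, div_div, div_sub_div _ _ hr0.ne' (by positivity), le_div_iff₀ (by positivity),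
      div_add_div _ _ (by norm_num) (by positivity), div_mul_eq_mul_div,
      div_le_iff₀ (by positivity)]
    nlinarith

theorem exists_eq_fiber_of_existsUnique {V ι : Type*} [Fintype V] [DecidableEq ι]
    {P : ι → Finset V} (hP : ∀ v, ∃! i, v ∈ P i) :
    ∃ f : V → ι, P = fun i => ({v | f v = i} : Finset V) := by
  choose f hf hf_unique using hP
  refine ⟨f, funext fun i => ?_⟩
  ext v
  simp only [mem_filter, mem_univ, true_and]
  exact ⟨fun h => (hf_unique v i h).symm, fun h => h ▸ hf v⟩

namespace Hypergraph

variable {V ι : Type*} [DecidableEq V] [DecidableEq ι]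

def partIncidences (G : Multiset (Finset V)) (f : V → ι) : ℕ :=
  (G.map fun e => #(e.image f)).sum

def lonelyVertices (f : V → ι) (e : Finset V) : Finset V :=
  {v ∈ e | f v ∉ (e.erase v).image f}

theorem edgesMeeting_fiber [Fintype V] (G : Multiset (Finset V)) (f : V → ι) (i : ι) :
    edgesMeeting G {v | f v = i} = G.countP fun e => i ∈ e.image f := by
  rw [edgesMeeting, Multiset.countP_eq_card_filter]
  congr 2
  ext e
  simp [Finset.Nonempty, and_comm]

theorem sum_edgesMeeting_fiber [Fintype V] [Fintype ι] (G : Multiset (Finset V)) (f : V → ι) :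
    ∑ i, edgesMeeting G {v | f v = i} = partIncidences G f := by
  simp only [edgesMeeting_fiber, Multiset.sum_countP_eq_sum_map_card_filter, partIncidences,
    filter_univ_mem]

theorem injOn_lonelyVertices (f : V → ι) (e : Finset V) : Set.InjOn f (lonelyVertices f e) := by
  intro v hv w hw hvw
  simp only [lonelyVertices, coe_filter, Set.mem_ofPred_eq] at hv hw
  by_contra hne
  exact hv.2 (mem_image.2 ⟨w, mem_erase.2 ⟨Ne.symm hne, hw.1⟩, hvw.symm⟩)

/-- Recolouring `v` with `b` adds `b` to the colours seen by `e` and loses `f v` exactly when `v`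
was alone in its colour class within `e`. -/
theorem card_image_update_add {f : V → ι} {v : V} {b : ι} (hvb : f v ≠ b) (e : Finset V) :
    #(e.image (update f v b)) + (if v ∈ lonelyVertices f e then 1 else 0)
      = #(e.image f) + (if v ∈ e ∧ b ∉ e.image f then 1 else 0) := by
  by_cases hv : v ∈ e
  · have himage (g : V → ι) : e.image g = insert (g v) ((e.erase v).image g) := by
      rw [← image_insert, insert_erase hv]
    have hrest : (e.erase v).image (update f v b) = (e.erase v).image f :=
      image_congr fun w hw => update_of_ne (ne_of_mem_erase hw) _ _
    rw [himage, himage, update_self, hrest]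
    simp only [lonelyVertices, mem_filter, hv, true_and, card_insert_eq_ite, mem_insert,
      Ne.symm hvb, false_or]
    split_ifs <;> omega
  · have hupd : e.image (update f v b) = e.image f :=
      image_congr fun w hw => update_of_ne (ne_of_mem_of_not_mem hw hv) _ _
    simp [hupd, lonelyVertices, hv]

theorem countP_le_countP_lonelyVertices {G : Multiset (Finset V)} {f : V → ι}
    (hf : ∀ g : V → ι, partIncidences G g ≤ partIncidences G f) (v : V) (b : ι) :
    G.countP (fun e => v ∈ e ∧ b ∉ e.image f)
      ≤ G.countP (fun e => v ∈ lonelyVertices f e ∧ f v ≠ b) := by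
  by_cases hvb : f v = b
  · rw [Multiset.countP_eq_zero.2]
    · exact Nat.zero_le _
    · rintro e - ⟨hv, hb⟩
      exact hb (hvb ▸ mem_image_of_mem f hv)
  · have hsum := congrArg Multiset.sum (Multiset.map_congr rfl fun e (_ : e ∈ G) =>
      card_image_update_add hvb e)
    simp only [Multiset.sum_map_add, Multiset.sum_map_ite_eq_mul_countP, one_mul] at hsum
    have := hf (update f v b)
    simp only [partIncidences] at this
    simp only [hvb, ne_eq, not_false_eq_true, and_true]
    omega

theorem card_lonelyVertices_lt (f : V → ι) {e : Finset V} (he : #(e.image f) < #e) :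
    #(lonelyVertices f e) < #(e.image f) := by
  have hsub : (lonelyVertices f e).image f ⊆ e.image f := image_subset_image (filter_subset _ _)
  rw [← card_image_of_injOn (injOn_lonelyVertices f e)]
  refine (card_le_card hsub).lt_of_ne fun hcard => he.ne ?_
  have himage := eq_of_subset_of_card_le hsub hcard.ge
  suffices lonelyVertices f e = e by
    rw [← this, card_image_of_injOn (injOn_lonelyVertices f e)]
  refine (filter_subset _ _).antisymm fun w hw => ?_
  obtain ⟨v, hv, hvw⟩ := mem_image.1 (himage ▸ mem_image_of_mem f hw)
  by_contra hwv
  have hne : w ≠ v := fun h => hwv (h ▸ hv)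
  exact (mem_filter.1 hv).2 (mem_image.2 ⟨w, mem_erase.2 ⟨hne, hw⟩, hvw.symm ▸ rfl⟩)

theorem card_filter_lonelyVertices_add_one_le (f : V → ι) (b : ι) {e : Finset V}
    (h : b ∈ e.image f ∨ #(e.image f) < #e) :
    #{v ∈ lonelyVertices f e | f v ≠ b} + 1 ≤ #(e.image f) := by
  rcases h with hb | hcard
  · have hsub : {v ∈ lonelyVertices f e | f v ≠ b}.image f ⊆ (e.image f).erase b := by
      intro i hi
      obtain ⟨v, hv, rfl⟩ := mem_image.1 hi
      obtain ⟨hvl, hvb⟩ := mem_filter.1 hv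
      exact mem_erase.2 ⟨hvb, mem_image_of_mem f (mem_filter.1 hvl).1⟩
    have hinj := (injOn_lonelyVertices f e).mono (coe_subset.2 (filter_subset (f · ≠ b) _))
    have := card_le_card hsub
    rw [card_image_of_injOn hinj, card_erase_of_mem hb] at this
    have := card_pos.2 ⟨b, hb⟩
    omega
  · exact (card_le_card (filter_subset _ _)).trans_lt (card_lonelyVertices_lt f hcard)

theorem card_mul_countP_add_card_le [Fintype V] [Fintype ι] {G : Multiset (Finset V)}
    (hG : ∀ e ∈ G, Fintype.card ι ≤ #e) {f : V → ι}
    (hf : ∀ g : V → ι, partIncidences G g ≤ partIncidences G f) (b : ι) :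
    Fintype.card ι * G.countP (fun e => b ∉ e.image f) + Multiset.card G
      ≤ partIncidences G f := by
  have hvertices : (G.map fun e => #{v | v ∈ e ∧ b ∉ e.image f}).sum
      ≤ (G.map fun e => #{v | v ∈ lonelyVertices f e ∧ f v ≠ b}).sum := by
    simpa only [Multiset.sum_countP_eq_sum_map_card_filter] using
      sum_le_sum fun v (_ : v ∈ univ) => countP_le_countP_lonelyVertices hf v b
  have hmissing (e : Finset V) (he : e ∈ G) :
      (if b ∉ e.image f then Fintype.card ι else 0) ≤ #{v | v ∈ e ∧ b ∉ e.image f} := by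
    by_cases hb : b ∈ e.image f
    · simp [hb]
    · simpa [hb, filter_univ_mem] using hG e he
  have hlonely (e : Finset V) (he : e ∈ G) :
      #{v | v ∈ lonelyVertices f e ∧ f v ≠ b} + 1 ≤ #(e.image f) := by
    rw [filter_and, filter_univ_mem, inter_filter, inter_univ]
    refine card_filter_lonelyVertices_add_one_le f b (or_iff_not_imp_left.2 fun hb => ?_)
    have : #(e.image f) ≤ #(univ.erase b) :=
      card_le_card fun i hi => mem_erase.2 ⟨ne_of_mem_of_not_mem hi hb, mem_univ i⟩
    rw [card_erase_of_mem (mem_univ b), card_univ] at this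
    have := Fintype.card_pos_iff.2 ⟨b⟩
    have := hG e he
    omega
  calc Fintype.card ι * G.countP (fun e => b ∉ e.image f) + Multiset.card G
      = (G.map fun e => if b ∉ e.image f then Fintype.card ι else 0).sum + Multiset.card G := by
        rw [Multiset.sum_map_ite_eq_mul_countP]
    _ ≤ (G.map fun e => #{v | v ∈ e ∧ b ∉ e.image f}).sum + Multiset.card G := by
        gcongr 1
        exact Multiset.sum_map_le_sum_map _ _ hmissing
    _ ≤ (G.map fun e => #{v | v ∈ lonelyVertices f e ∧ f v ≠ b} + 1).sum := by
        rw [Multiset.sum_map_add]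
        simpa using hvertices
    _ ≤ partIncidences G f := Multiset.sum_map_le_sum_map _ _ hlonely

end Hypergraph

open Hypergraph

/-- Let `r ≥ 4`, `c = r/(3r-4)`, and let `V₁, …, V_r` be a partition of the vertex set of an
`r`-uniform multi-hypergraph maximising `∑ i, d(Vᵢ)`, ordered with `d(V₁) ≥ ⋯ ≥ d(V_r)`.
If `d(V_r) < c m / 2`, then
`(1/r) ∑ i, d(Vᵢ)/m > (r+1)/r - c/2 ≥ max (2c) (2/3 + c/6)`. -/
theorem statement18 (r : ℕ) (hr : 4 ≤ r) {V : Type*} [Fintype V] [DecidableEq V]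
    (G : Multiset (Finset V)) (hunif : ∀ e ∈ G, e.card = r)
    (m : ℕ) (hm : Multiset.card G = m)
    (c : ℝ) (hc : c = (r : ℝ) / (3 * r - 4))
    (P : Fin r → Finset V) (hpart : ∀ v : V, ∃! i, v ∈ P i)
    (hmax : ∀ Q : Fin r → Finset V, (∀ v : V, ∃! i, v ∈ Q i) →
      ∑ i : Fin r, edgesMeeting G (Q i) ≤ ∑ i : Fin r, edgesMeeting G (P i))
    (hVr : (edgesMeeting G (P ⟨r - 1, by omega⟩) : ℝ) < c * m / 2) :
    ((r : ℝ) + 1) / r - c / 2 < (1 / r) * ((∑ i : Fin r, (edgesMeeting G (P i) : ℝ)) / m) ∧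
      max (2 * c) (2 / 3 + c / 6) ≤ ((r : ℝ) + 1) / r - c / 2 := by
  obtain ⟨f, rfl⟩ := exists_eq_fiber_of_existsUnique hpart
  set last : Fin r := ⟨r - 1, by omega⟩
  have hf (g : V → Fin r) : partIncidences G g ≤ partIncidences G f := by
    simpa only [sum_edgesMeeting_fiber] using
      hmax (fun i => {v | g v = i}) fun v => ⟨g v, by simp, by simp⟩
  have hcount := card_mul_countP_add_card_le (fun e he => ((Fintype.card_fin r).trans
    (hunif e he).symm).le) hf last
  have hmain : (r + 1) * m
      ≤ ∑ i, edgesMeeting G {v | f v = i} + r * edgesMeeting G {v | f v = last} := by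
    rw [sum_edgesMeeting_fiber, edgesMeeting_fiber, ← hm,
      Multiset.card_eq_countP_add_countP (fun e => last ∈ e.image f)]
    rw [Fintype.card_fin, Multiset.card_eq_countP_add_countP (fun e => last ∈ e.image f)]
      at hcount
    linarith
  have hm0 : 0 < m := Nat.pos_of_ne_zero <| by
    rintro rfl
    simp only [CharP.cast_eq_zero, mul_zero, zero_div] at hVr
    exact absurd hVr (not_lt.2 (Nat.cast_nonneg _))
  refine ⟨lt_mean_of_add_one_mul_le (by positivity) (by exact_mod_cast hm0)
    (by exact_mod_cast hmain) hVr, hc ▸ max_le_add_one_div_sub_half r (by exact_mod_cast hr)⟩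
end
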